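/- For any equivariant sheaf (r : R → X_T, ρ) on the topological groupoid G_T ⇉ X_T and any point x₀ ∈ R, there exist an L-formula φ with n free variables, a tuple a⃗ ∈ αⁿ, and a continuous section v : ⟨φ, a⃗⟩ → R of r (i.e. r(v(M)) = M for all M ∈ ⟨φ, a⃗⟩) with x₀ in the image of v, such that for every (M,N,f) ∈ G_T with M ∈ ⟨φ, a⃗⟩ and f(aᵢ) = aᵢ for all i (so that also N ∈ ⟨φ, a⃗⟩), one has ρ((M,N,f), v(M)) = v(N). -/

import Mathlib

open FirstOrder FirstOrder.Language Set Topology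

universe u v w x

variable {L : FirstOrder.Language.{u, v}} {α : Type w}

/-- A model of `T` whose carrier is a subset of `α`: an element of the set `X_T` of
small models of `T`. -/
structure SmallModel (L : FirstOrder.Language.{u, v}) (α : Type w) (T : L.Theory) where
  carrier : Set α
  struc : L.Structure carrier
  models : @FirstOrder.Language.Theory.Model L carrier struc T

/-- `M.Sat φ v` means that the formula `φ` is realized in the small model `M`
at the valuation `v`. -/
def SmallModel.Sat {T : L.Theory} (M : SmallModel L α T) {ι : Type*}
    (φ : L.Formula ι) (v : ι → M.carrier) : Prop :=
  letI := M.struc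
  φ.Realize v

/-- The basic open set `⟨φ, b⟩ ⊆ X_T`. -/
def XBasic {T : L.Theory} {n : ℕ} (φ : L.Formula (Fin n)) (b : Fin n → α) :
    Set (SmallModel L α T) :=
  {M | ∃ h : ∀ i, b i ∈ M.carrier, M.Sat φ fun i => ⟨b i, h i⟩}

/-- The logical topology on `X_T`, generated by the sets `⟨φ, b⟩`. -/
instance SmallModel.instTopologicalSpace {T : L.Theory} :
    TopologicalSpace (SmallModel L α T) :=
  TopologicalSpace.generateFrom
    {U | ∃ (n : ℕ) (φ : L.Formula (Fin n)) (b : Fin n → α), U = XBasic φ b}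

/-- Isomorphisms of `L`-structures between two small models. -/
abbrev StrEquiv {T : L.Theory} (A B : SmallModel L α T) : Type _ :=
  @FirstOrder.Language.Equiv L A.carrier B.carrier A.struc B.struc

/-- The underlying function of an isomorphism of small models. -/
def StrEquiv.fn {T : L.Theory} {A B : SmallModel L α T} (f : StrEquiv A B) :
    A.carrier → B.carrier :=
  (@FirstOrder.Language.Equiv.toEquiv L A.carrier B.carrier A.struc B.struc f)

/-- Composition of isomorphisms of small models. -/
def StrEquiv.comp {T : L.Theory} {A B C : SmallModel L α T}
    (g : StrEquiv B C) (f : StrEquiv A B) : StrEquiv A C :=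
  letI := A.struc; letI := B.struc; letI := C.struc
  FirstOrder.Language.Equiv.comp g f

/-- An element of `G_T`: a triple `(M, N, f)` with `M, N ∈ X_T` and `f : M ≅ N` an
isomorphism of `L`-structures. -/
structure ModelIso (L : FirstOrder.Language.{u, v}) (α : Type w) (T : L.Theory) where
  src : SmallModel L α T
  tgt : SmallModel L α T
  iso : StrEquiv src tgt

/-- The basic open set `⟨a ↦ b⟩ ⊆ G_T`. -/
def GMapsTo {T : L.Theory} (a b : α) : Set (ModelIso L α T) :=
  {g | ∃ h : a ∈ g.src.carrier, (StrEquiv.fn g.iso ⟨a, h⟩ : α) = b}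

/-- The logical topology on `G_T`, generated by the sets `s⁻¹⟨φ, b⟩`, `t⁻¹⟨φ, b⟩` and
`⟨a ↦ b⟩`. -/
instance ModelIso.instTopologicalSpace {T : L.Theory} :
    TopologicalSpace (ModelIso L α T) :=
  TopologicalSpace.generateFrom
    ({U | ∃ (n : ℕ) (φ : L.Formula (Fin n)) (b : Fin n → α),
        U = ModelIso.src ⁻¹' XBasic φ b} ∪
     {U | ∃ (n : ℕ) (φ : L.Formula (Fin n)) (b : Fin n → α),
        U = ModelIso.tgt ⁻¹' XBasic φ b} ∪
     {U | ∃ a b : α, U = GMapsTo (T := T) a b})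

/-- The identity arrow of `G_T` at a model `M`. -/
def ModelIso.idIso {T : L.Theory} (M : SmallModel L α T) : ModelIso L α T :=
  ⟨M, M, letI := M.struc; FirstOrder.Language.Equiv.refl L M.carrier⟩

/-- The inverse of an arrow of `G_T`. -/
def ModelIso.invIso {T : L.Theory} (g : ModelIso L α T) : ModelIso L α T :=
  ⟨g.tgt, g.src, letI := g.src.struc; letI := g.tgt.struc;
    FirstOrder.Language.Equiv.symm g.iso⟩

/-- An equivariant sheaf `(r : R → X_T, ρ)` on the topological groupoid `G_T ⇉ X_T`:
a local homeomorphism `r` into `X_T` together with a continuous action `ρ` of `G_T`. -/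
structure EquivSheaf (L : FirstOrder.Language.{u, v}) (α : Type w) (T : L.Theory) where
  /-- The total space. -/
  R : Type x
  [topR : TopologicalSpace R]
  /-- The projection to the space of models. -/
  r : R → SmallModel L α T
  isLocalHomeomorph_r : IsLocalHomeomorph r
  /-- The action `ρ : G_T ×_{X_T} R → R`, defined on the set of pairs `((M,N,f), z)`
  with `r z = M`, topologized as a subspace of the product. -/
  act : {q : ModelIso L α T × R // r q.2 = q.1.src} → R
  continuous_act : Continuous act
  r_act : ∀ q, r (act q) = q.1.1.tgt
  act_id : ∀ z : R, act ⟨(ModelIso.idIso (r z), z), rfl⟩ = z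
  act_comp : ∀ (A B C : SmallModel L α T) (f : StrEquiv A B) (g : StrEquiv B C)
      (z : R) (hz : r z = A),
    act ⟨((⟨B, C, g⟩ : ModelIso L α T),
          act ⟨((⟨A, B, f⟩ : ModelIso L α T), z), hz⟩), r_act _⟩ =
      act ⟨((⟨A, C, StrEquiv.comp g f⟩ : ModelIso L α T), z), hz⟩

attribute [instance] EquivSheaf.topR

/-!
Take the local inverse `s` of `r` through `x₀`, defined over a basic open `⟨φ, a⃗⟩`. The map
`g ↦ ρ(g, s(src g))` is continuous and sends the identity arrow at `r x₀` into the open set on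
which `s` inverts `r`; so does a basic neighbourhood of that identity, and such a neighbourhood
contains every arrow between models of some `⟨ψ, b⃗⟩ ∋ r x₀` fixing `b⃗`. For such an arrow
`g : M ≅ N`, both `ρ(g, s M)` and `s N` lie in that open set over `N`, hence coincide. The
section is `s` restricted to `⟨φ ∧ ψ, a⃗ b⃗⟩`.
-/

section LogicalTopology

variable {T : L.Theory}

lemma SmallModel.sat_inf {M : SmallModel L α T} {ι : Type*} {φ ψ : L.Formula ι}
    {v : ι → M.carrier} : M.Sat (φ ⊓ ψ) v ↔ M.Sat φ v ∧ M.Sat ψ v :=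
  letI := M.struc; Formula.realize_inf

lemma SmallModel.sat_relabel {M : SmallModel L α T} {ι κ : Type*} {φ : L.Formula ι}
    {g : ι → κ} {v : κ → M.carrier} : M.Sat (φ.relabel g) v ↔ M.Sat φ (v ∘ g) :=
  letI := M.struc; Formula.realize_relabel

lemma mem_xBasic_iff {n : ℕ} {φ : L.Formula (Fin n)} {b : Fin n → α} {M : SmallModel L α T} :
    M ∈ XBasic φ b ↔ ∃ v : Fin n → M.carrier, Subtype.val ∘ v = b ∧ M.Sat φ v :=
  ⟨fun ⟨_, hφ⟩ => ⟨_, rfl, hφ⟩, fun ⟨v, hv, hφ⟩ => hv ▸ ⟨fun i => (v i).2, hφ⟩⟩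

lemma xBasic_top_elim0 :
    XBasic (T := T) (⊤ : L.Formula (Fin 0)) (Fin.elim0 : Fin 0 → α) = univ :=
  eq_univ_of_forall fun _ => ⟨finZeroElim, by simp [SmallModel.Sat]⟩

def FirstOrder.Language.Formula.infAppend {m n : ℕ} (φ : L.Formula (Fin m))
    (ψ : L.Formula (Fin n)) : L.Formula (Fin (m + n)) :=
  φ.relabel (Fin.castAdd n) ⊓ ψ.relabel (Fin.natAdd m)

lemma xBasic_infAppend {m n : ℕ} (φ : L.Formula (Fin m)) (a : Fin m → α)
    (ψ : L.Formula (Fin n)) (b : Fin n → α) :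
    XBasic (T := T) (φ.infAppend ψ) (Fin.append a b) = XBasic φ a ∩ XBasic ψ b := by
  ext M
  simp only [mem_inter_iff, mem_xBasic_iff, Formula.infAppend, SmallModel.sat_inf,
    SmallModel.sat_relabel]
  constructor
  · rintro ⟨v, hv, hφ, hψ⟩
    refine ⟨⟨_, ?_, hφ⟩, ⟨_, ?_, hψ⟩⟩
    · ext i; exact (congrFun hv _).trans (Fin.append_left a b i)
    · ext i; exact (congrFun hv _).trans (Fin.append_right a b i)
  · rintro ⟨⟨v, rfl, hφ⟩, ⟨w, rfl, hψ⟩⟩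
    refine ⟨Fin.append v w, ?_, ?_, ?_⟩
    · ext i; exact Fin.addCases (by simp) (by simp) i
    · convert hφ; ext i; simp
    · convert hψ; ext i; simp

lemma isTopologicalBasis_xBasic :
    TopologicalSpace.IsTopologicalBasis
      {U : Set (SmallModel L α T) | ∃ (n : ℕ) (φ : L.Formula (Fin n)) (b : Fin n → α),
        U = XBasic φ b} where
  exists_subset_inter := by
    rintro _ ⟨m, φ, a, rfl⟩ _ ⟨n, ψ, b, rfl⟩ M hM
    exact ⟨_, ⟨_, _, _, rfl⟩, by rwa [xBasic_infAppend], by rw [xBasic_infAppend]⟩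
  sUnion_eq := sUnion_eq_univ_iff.2 fun _ => ⟨_, ⟨0, ⊤, _, xBasic_top_elim0.symm⟩, trivial⟩
  eq_generateFrom := rfl

lemma isOpen_xBasic {n : ℕ} (φ : L.Formula (Fin n)) (b : Fin n → α) :
    IsOpen (XBasic (T := T) φ b) :=
  isTopologicalBasis_xBasic.isOpen ⟨n, φ, b, rfl⟩

lemma exists_xBasic_subset {V : Set (SmallModel L α T)} (hV : IsOpen V)
    {M : SmallModel L α T} (hM : M ∈ V) :
    ∃ (n : ℕ) (φ : L.Formula (Fin n)) (a : Fin n → α), M ∈ XBasic φ a ∧ XBasic φ a ⊆ V := by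
  obtain ⟨_, ⟨n, φ, a, rfl⟩, hMU, hUV⟩ :=
    isTopologicalBasis_xBasic.exists_subset_of_mem_open hM hV
  exact ⟨n, φ, a, hMU, hUV⟩

lemma continuous_src : Continuous (ModelIso.src : ModelIso L α T → SmallModel L α T) :=
  continuous_generateFrom_iff.2 fun _ ⟨n, φ, b, hU⟩ =>
    TopologicalSpace.isOpen_generateFrom_of_mem (Or.inl (Or.inl ⟨n, φ, b, congrArg _ hU⟩))

def FixingArrows {n : ℕ} (φ : L.Formula (Fin n)) (a : Fin n → α) : Set (ModelIso L α T) :=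
  {g | g.src ∈ XBasic φ a ∧ g.tgt ∈ XBasic φ a ∧
    ∀ (i : Fin n) (hi : a i ∈ g.src.carrier), (StrEquiv.fn g.iso ⟨a i, hi⟩ : α) = a i}

lemma fixingArrows_infAppend_subset {m n : ℕ} (φ : L.Formula (Fin m)) (a : Fin m → α)
    (ψ : L.Formula (Fin n)) (b : Fin n → α) :
    FixingArrows (T := T) (φ.infAppend ψ) (Fin.append a b) ⊆
      FixingArrows φ a ∩ FixingArrows ψ b := by
  rintro g ⟨hs, ht, hfix⟩
  rw [xBasic_infAppend] at hs ht
  refine ⟨⟨hs.1, ht.1, fun i hi => ?_⟩, ⟨hs.2, ht.2, fun i hi => ?_⟩⟩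
  · simpa using hfix (Fin.castAdd n i) (by simpa using hi)
  · simpa using hfix (Fin.natAdd m i) (by simpa using hi)

lemma exists_fixingArrows_subset {W : Set (ModelIso L α T)} (hW : IsOpen W)
    {M : SmallModel L α T} (hM : ModelIso.idIso M ∈ W) :
    ∃ (n : ℕ) (φ : L.Formula (Fin n)) (a : Fin n → α),
      M ∈ XBasic φ a ∧ FixingArrows φ a ⊆ W := by
  induction hW generalizing M with
  | basic U hU =>
    rcases hU with (⟨n, φ, b, rfl⟩ | ⟨n, φ, b, rfl⟩) | ⟨c, d, rfl⟩
    · exact ⟨n, φ, b, hM, fun g hg => hg.1⟩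
    · exact ⟨n, φ, b, hM, fun g hg => hg.2.1⟩
    · -- the identity at `M` lies in `⟨c ↦ d⟩` only if `c = d`; arrows fixing `c` lie in `⟨c ↦ c⟩`
      obtain ⟨hc, rfl⟩ := hM
      refine ⟨1, ⊤, ![c], ⟨Fin.forall_fin_one.2 hc, by simp [SmallModel.Sat]⟩, fun g hg => ?_⟩
      exact ⟨_, hg.2.2 0 (hg.1.1 0)⟩
  | univ => exact ⟨0, ⊤, Fin.elim0, xBasic_top_elim0 ▸ mem_univ M, subset_univ _⟩
  | inter U V _ _ ihU ihV =>
    obtain ⟨m, φ, a, hMφ, hφ⟩ := ihU hM.1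
    obtain ⟨n, ψ, b, hMψ, hψ⟩ := ihV hM.2
    exact ⟨m + n, φ.infAppend ψ, Fin.append a b, xBasic_infAppend φ a ψ b ▸ ⟨hMφ, hMψ⟩,
      (fixingArrows_infAppend_subset φ a ψ b).trans (inter_subset_inter hφ hψ)⟩
  | sUnion S _ ih =>
    obtain ⟨U, hUS, hMU⟩ := hM
    obtain ⟨n, φ, a, hMφ, hφ⟩ := ih U hUS hMU
    exact ⟨n, φ, a, hMφ, hφ.trans (subset_sUnion_of_mem hUS)⟩

end LogicalTopology

namespace EquivSheaf

variable {T : L.Theory} (E : EquivSheaf.{u, v, w, x} L α T)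

lemma act_idIso {M : SmallModel L α T} (z : E.R) (hz : E.r z = M) :
    E.act ⟨(ModelIso.idIso M, z), hz⟩ = z := by
  subst hz
  exact E.act_id z

lemma isOpen_setOf_act_mem {U : Set (SmallModel L α T)} (hU : IsOpen U)
    {s : SmallModel L α T → E.R} (hs : ContinuousOn s U) (hrs : ∀ M ∈ U, E.r (s M) = M)
    {O : Set E.R} (hO : IsOpen O) :
    IsOpen {g : ModelIso L α T | ∃ h : g.src ∈ U, E.act ⟨(g, s g.src), hrs _ h⟩ ∈ O} := by
  let F : ModelIso.src ⁻¹' U → E.R := fun g => E.act ⟨(g.1, s g.1.src), hrs _ g.2⟩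
  have hF : Continuous F := E.continuous_act.comp <| Continuous.subtype_mk
    (continuous_subtype_val.prodMk <|
      hs.comp_continuous (continuous_src.comp continuous_subtype_val) fun g => g.2) _
  convert (hU.preimage continuous_src).isOpenMap_subtype_val _ (hO.preimage hF)
  ext g
  constructor
  · rintro ⟨h, hg⟩
    exact ⟨⟨g, h⟩, hg, rfl⟩
  · rintro ⟨⟨g, h⟩, hg, rfl⟩
    exact ⟨h, hg⟩

end EquivSheaf

/-- **Well-behaved sections exist**: for any equivariant sheaf `(r : R → X_T, ρ)` on
`G_T ⇉ X_T` and any point `x₀ ∈ R`, there is a continuous section `v` of `r` over some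
basic open `⟨φ, a⃗⟩ ⊆ X_T`, with `x₀` in its image, such that `ρ((M,N,f), v(M)) = v(N)`
for every isomorphism `f : M ≅ N` between models of `⟨φ, a⃗⟩` fixing all the `aᵢ`. -/
theorem exists_invariant_section {T : L.Theory} (E : EquivSheaf.{u, v, w, x} L α T)
    (x₀ : E.R) :
    ∃ (n : ℕ) (φ : L.Formula (Fin n)) (a : Fin n → α)
      (v : ↥(XBasic (T := T) φ a) → E.R)
      (hsec : ∀ M : ↥(XBasic (T := T) φ a), E.r (v M) = ↑M),
      Continuous v ∧ (∃ M, v M = x₀) ∧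
      ∀ (g : ModelIso L α T) (hM : g.src ∈ XBasic φ a) (hN : g.tgt ∈ XBasic φ a),
        (∀ (i : Fin n) (hi : a i ∈ g.src.carrier), (StrEquiv.fn g.iso ⟨a i, hi⟩ : α) = a i) →
        E.act ⟨(g, v ⟨g.src, hM⟩), hsec ⟨g.src, hM⟩⟩ = v ⟨g.tgt, hN⟩ := by
  obtain ⟨e, hx₀, hre⟩ := E.isLocalHomeomorph_r x₀
  have hsec : ∀ M ∈ e.target, E.r (e.symm M) = M := fun M hM => hre ▸ e.right_inv hM
  have hsymm : e.symm (E.r x₀) = x₀ := hre ▸ e.left_inv hx₀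
  obtain ⟨m, φ, a, hx₀φ, hφ⟩ := exists_xBasic_subset e.open_target (hre ▸ e.map_source hx₀)
  obtain ⟨n, ψ, b, hx₀ψ, hψ⟩ := exists_fixingArrows_subset
    (E.isOpen_setOf_act_mem (isOpen_xBasic φ a) (e.continuousOn_symm.mono hφ)
      (fun M hM => hsec M (hφ hM)) e.open_source)
    ⟨hx₀φ, ((E.act_idIso _ _).trans hsymm).symm ▸ hx₀⟩
  have hφψ : XBasic (T := T) (φ.infAppend ψ) (Fin.append a b) ⊆ e.target :=
    fun M hM => hφ ((xBasic_infAppend φ a ψ b).subset hM).1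
  refine ⟨m + n, φ.infAppend ψ, Fin.append a b, fun M => e.symm M, fun M => hsec M (hφψ M.2),
    e.continuousOn_symm.comp_continuous continuous_subtype_val fun M => hφψ M.2,
    ⟨⟨E.r x₀, (xBasic_infAppend φ a ψ b).symm.subset ⟨hx₀φ, hx₀ψ⟩⟩, hsymm⟩, ?_⟩
  intro g hM hN hfix
  obtain ⟨_, hg⟩ := hψ (fixingArrows_infAppend_subset φ a ψ b ⟨hM, hN, hfix⟩).2
  calc _ = e.symm (e _) := (e.left_inv hg).symm
    _ = e.symm g.tgt := by rw [← hre, E.r_act]
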